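/- For a vertex v of T, let T(v) denote the highest vertex of the decomposition D whose root is v (the largest decomposition subtree rooted at v), and let h(v) be the height of T(v). Then h(v) depends only on the depth of v: if u and v are vertices of T with d(u) = d(v), then h(u) = h(v). -/

import Mathlib

namespace VEB

inductive OTree : Type where
  | node : List OTree → OTree

def OTree.children : OTree → List OTree
  | .node cs => cs

mutual
  def height : OTree → ℕ
    | .node cs => 1 + heightList cs
  def heightList : List OTree → ℕ
    | [] => 0
    | c :: cs => max (height c) (heightList cs)
end

def subtreeAt? : OTree → List ℕ → Option OTree
  | t, [] => some t
  | t, i :: p =>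
    match t.children[i]? with
    | some c => subtreeAt? c p
    | none => none

/-- `p` is (the path of) a vertex of `t`. -/
def IsVertex (t : OTree) (p : List ℕ) : Prop := (subtreeAt? t p).isSome

/-- `p` is a leaf of `t`. -/
def IsLeaf (t : OTree) (p : List ℕ) : Prop := subtreeAt? t p = some (.node [])

/-- All leaves of `t` are at the same depth (the bottom level). -/
def Uniform (t : OTree) : Prop := ∀ p, IsLeaf t p → p.length + 1 = height t

/-- The top `m+1` levels of `t` (the truncation of height `m+1`). -/
def trunc : ℕ → OTree → OTree
  | 0, _ => .node []
  | m+1, t => .node (t.children.map (trunc m))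

/-- Paths of the vertices at depth `m`, in left-to-right order. -/
def levelPaths : ℕ → OTree → List (List ℕ)
  | 0, _ => [[]]
  | m+1, t => ((t.children.zipIdx.map Prod.swap).map fun ic => (levelPaths m ic.2).map (ic.1 :: ·)).flatten

/-- The level at which a tree of height `h` is cut: `max ⌊ε h⌋ 1`. -/
noncomputable def cutLevel (ε : ℝ) (h : ℕ) : ℕ := max ⌊ε * (h : ℝ)⌋₊ 1

/-- The van Emde Boas order of the vertex paths of `t` (with recursion fuel). -/
noncomputable def vEBAux (ε : ℝ) : ℕ → OTree → List (List ℕ)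
  | 0, _ => []
  | fuel+1, t =>
    if height t ≤ 1 then [[]]
    else
      let m := cutLevel ε (height t)
      vEBAux ε fuel (trunc (m - 1) t) ++
        ((levelPaths m t).map fun q =>
          match subtreeAt? t q with
          | some s => (vEBAux ε fuel s).map (q ++ ·)
          | none => []).flatten

/-- The van Emde Boas order `vEB_ε(t)` of the vertex paths of `t`. -/
noncomputable def vEB (ε : ℝ) (t : OTree) : List (List ℕ) := vEBAux ε (height t) t

/-- Position (index) of vertex `p` in the van Emde Boas order. -/
noncomputable def pos (ε : ℝ) (t : OTree) (p : List ℕ) : ℕ := (vEB ε t).idxOf p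

/-- `A` is a set of vertices occupying consecutive positions in `vEB_ε(t)`. -/
def MemInterval (ε : ℝ) (t : OTree) (A : Set (List ℕ)) : Prop :=
  ∃ i n, A = {p | p ∈ ((vEB ε t).drop i).take n}

/-- The vertices of the decomposition `D` of `t`: pairs `(p, k)` of the root path
and the height of a decomposition subtree (with recursion fuel). -/
noncomputable def decompAux (ε : ℝ) : ℕ → OTree → List (List ℕ × ℕ)
  | 0, _ => []
  | fuel+1, t =>
    if height t ≤ 1 then [([], 1)]
    else
      let m := cutLevel ε (height t)
      ([], height t) ::
        (decompAux ε fuel (trunc (m - 1) t) ++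
          ((levelPaths m t).map fun q =>
            match subtreeAt? t q with
            | some s => (decompAux ε fuel s).map fun r => (q ++ r.1, r.2)
            | none => []).flatten)

/-- The vertices of the decomposition `D` of `t`. -/
noncomputable def decompVerts (ε : ℝ) (t : OTree) : List (List ℕ × ℕ) :=
  decompAux ε (height t) t

/-- The children in the decomposition tree `D` of the decomposition vertex `(p, k)`:
the top tree followed by the bottom trees in left-to-right order. -/
noncomputable def dChildren (ε : ℝ) (t : OTree) (p : List ℕ) (k : ℕ) : List (List ℕ × ℕ) :=
  if k ≤ 1 then []
  else
    match subtreeAt? t p with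
    | some s =>
      (p, cutLevel ε k) ::
        (levelPaths (cutLevel ε k) s).map fun q => (p ++ q, k - cutLevel ε k)
    | none => []

/-- The decomposition subtree `(p, k)` contains the vertex `w` of `t`;
equivalently, the leaf `{w}` of `D` lies in the subtree of `D` rooted at `(p, k)`. -/
def DContains (p : List ℕ) (k : ℕ) (w : List ℕ) : Prop :=
  p <+: w ∧ w.length < p.length + k

/-- Vertex `v` is to the left of the branch with leaf `ℓ`. -/
def LeftOfBranch (v ℓ : List ℕ) : Prop := List.Lex (· < ·) v (ℓ.take v.length)

/-- Vertex `v` is to the right of the branch with leaf `ℓ`. -/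
def RightOfBranch (v ℓ : List ℕ) : Prop := List.Lex (· < ·) (ℓ.take v.length) v

/-- Every internal vertex of `t` has at least `a` children. -/
def MinArity (t : OTree) (a : ℕ) : Prop :=
  ∀ p s, subtreeAt? t p = some s → s.children ≠ [] → a ≤ s.children.length

/-- Every internal vertex of `t` has at most `b` children. -/
def MaxArity (t : OTree) (b : ℕ) : Prop :=
  ∀ p s, subtreeAt? t p = some s → s.children.length ≤ b

/-- `w` lies on the leftmost branch descending from `v` (always taking the leftmost child). -/
def OnLeftmostBranch (v w : List ℕ) : Prop :=
  v <+: w ∧ ∀ n (hn : n < w.length), v.length ≤ n → w.get ⟨n, hn⟩ = 0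

/-- `w` lies on the rightmost branch descending from `v` (always taking the rightmost child). -/
def OnRightmostBranch (t : OTree) (v w : List ℕ) : Prop :=
  v <+: w ∧ ∀ n (hn : n < w.length), v.length ≤ n →
    ∀ s, subtreeAt? t (w.take n) = some s → w.get ⟨n, hn⟩ + 1 = s.children.length


/-! In a uniform tree every decomposition step cuts all vertices of one depth at the same level,
and every bottom tree of a fixed cut has the same height. Hence, by induction on the recursion,
whether `(p, k)` is a vertex of the decomposition depends only on the depth of `p` (and the height
of the tree): if `(u, k)` is a decomposition vertex, so is `(v, k)` for every vertex `v` with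
`d(v) = d(u)`. Applying this in both directions shows that the largest such `k` agree. -/

lemma height_pos (t : OTree) : 0 < height t := by
  cases t; simp [height]

lemma height_le_heightList_of_mem {c : OTree} {cs : List OTree} (h : c ∈ cs) :
    height c ≤ heightList cs := by
  induction cs with
  | nil => simp at h
  | cons d ds ih =>
    rcases List.mem_cons.1 h with rfl | h
    · simp [heightList]
    · simp [heightList, ih h]

lemma exists_height_eq_heightList {cs : List OTree} (h : cs ≠ []) :
    ∃ c ∈ cs, height c = heightList cs := by
  induction cs with
  | nil => simp at h
  | cons c cs ih =>
    rcases eq_or_ne cs [] with rfl | hne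
    · exact ⟨c, by simp, by simp [heightList]⟩
    · obtain ⟨c', hc', hh⟩ := ih hne
      rcases le_total (height c) (heightList cs) with hle | hle
      · exact ⟨c', by simp [hc'], by simp [heightList, max_eq_right hle, hh]⟩
      · exact ⟨c, by simp, by simp [heightList, max_eq_left hle]⟩

lemma subtreeAt?_cons (t : OTree) (i : ℕ) (p : List ℕ) :
    subtreeAt? t (i :: p) = t.children[i]?.bind (subtreeAt? · p) := by
  cases h : t.children[i]? <;> simp [subtreeAt?, h]

lemma subtreeAt?_append (t : OTree) (p q : List ℕ) :
    subtreeAt? t (p ++ q) = (subtreeAt? t p).bind (subtreeAt? · q) := by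
  induction p generalizing t with
  | nil => rfl
  | cons i p ih =>
    rw [List.cons_append, subtreeAt?_cons, subtreeAt?_cons]
    cases t.children[i]? with
    | none => rfl
    | some c => exact ih c

lemma isVertex_of_subtreeAt? {t s : OTree} {p : List ℕ} (h : subtreeAt? t p = some s) :
    IsVertex t p := by
  simp [IsVertex, h]

lemma isVertex_append_iff {t : OTree} {p q : List ℕ} :
    IsVertex t (p ++ q) ↔ ∃ s, subtreeAt? t p = some s ∧ IsVertex s q := by
  unfold IsVertex
  rw [subtreeAt?_append]
  cases subtreeAt? t p <;> simp

lemma length_lt_height {t s : OTree} {p : List ℕ} (h : subtreeAt? t p = some s) :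
    p.length < height t := by
  induction p generalizing t with
  | nil => simpa using height_pos t
  | cons i p ih =>
    obtain ⟨cs⟩ := t
    rw [subtreeAt?_cons, Option.bind_eq_some_iff] at h
    obtain ⟨c, hc, hcs⟩ := h
    have hc' : height c ≤ heightList cs := height_le_heightList_of_mem (List.mem_of_getElem? hc)
    have := ih hcs
    simp only [List.length_cons, height]
    omega

lemma exists_leaf_length_add_one_eq_height (t : OTree) :
    ∃ p, IsLeaf t p ∧ p.length + 1 = height t := by
  induction t using OTree.rec (motive_2 := fun cs => cs.Forall fun c => ∃ p, IsLeaf c p ∧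
      p.length + 1 = height c) with
  | node cs ih =>
    rcases eq_or_ne cs [] with rfl | hne
    · exact ⟨[], rfl, by simp [height, heightList]⟩
    · obtain ⟨c, hc, hh⟩ := exists_height_eq_heightList hne
      obtain ⟨i, hi⟩ := List.getElem?_of_mem hc
      obtain ⟨p, hp, hlen⟩ := List.forall_iff_forall_mem.1 ih c hc
      refine ⟨i :: p, ?_, ?_⟩
      · simpa [IsLeaf, subtreeAt?_cons, OTree.children, hi] using hp
      · simp only [List.length_cons, height]
        omega
  | nil => trivial
  | cons c cs ihc ihcs => exact (List.forall_cons _ _ _).2 ⟨ihc, ihcs⟩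

lemma Uniform.subtreeAt? {t s : OTree} {p : List ℕ} (ht : Uniform t)
    (h : subtreeAt? t p = some s) : Uniform s ∧ height s + p.length = height t := by
  have hleaf : ∀ q, IsLeaf s q → p.length + q.length + 1 = height t := by
    intro q hq
    have : IsLeaf t (p ++ q) := by
      unfold IsLeaf at hq ⊢
      rw [subtreeAt?_append, h]
      exact hq
    simpa using ht _ this
  obtain ⟨q₀, hq₀, hq₀len⟩ := exists_leaf_length_add_one_eq_height s
  have := hleaf q₀ hq₀
  refine ⟨fun q hq => ?_, by omega⟩
  have := hleaf q hq
  omega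

lemma height_trunc (m : ℕ) (t : OTree) : height (trunc m t) = min (m + 1) (height t) := by
  induction m generalizing t with
  | zero =>
    have := height_pos t
    simp only [trunc, height, heightList]
    omega
  | succ m ih =>
    obtain ⟨cs⟩ := t
    have hl : ∀ ds : List OTree, heightList (ds.map (trunc m)) = min (m + 1) (heightList ds) := by
      intro ds
      induction ds with
      | nil => simp [heightList]
      | cons d ds ihd =>
        simp only [List.map_cons, heightList, ihd, ih d]
        exact (min_max_distrib_left ..).symm
    simp only [trunc, OTree.children, height, hl cs]
    omega

lemma subtreeAt?_trunc {p : List ℕ} {m : ℕ} (t : OTree) (h : p.length ≤ m) :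
    subtreeAt? (trunc m t) p = (subtreeAt? t p).map (trunc (m - p.length)) := by
  induction p generalizing m t with
  | nil => rfl
  | cons i p ih =>
    obtain _ | m := m
    · simp at h
    obtain ⟨cs⟩ := t
    simp only [subtreeAt?_cons, trunc, OTree.children, List.getElem?_map]
    cases cs[i]? with
    | none => rfl
    | some c => simp [ih c (by simpa using h)]

lemma isVertex_trunc_iff {p : List ℕ} {m : ℕ} {t : OTree} :
    IsVertex (trunc m t) p ↔ IsVertex t p ∧ p.length ≤ m := by
  constructor
  · intro h
    obtain ⟨s, hs⟩ := Option.isSome_iff_exists.1 h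
    have hlen : p.length ≤ m := by
      have := length_lt_height hs
      rw [height_trunc] at this
      omega
    unfold IsVertex at h
    rw [subtreeAt?_trunc t hlen] at h
    exact ⟨by simpa [IsVertex] using h, hlen⟩
  · rintro ⟨h, hlen⟩
    unfold IsVertex at h ⊢
    rw [subtreeAt?_trunc t hlen]
    simpa using h

lemma Uniform.trunc {t : OTree} (ht : Uniform t) (m : ℕ) : Uniform (trunc m t) := by
  intro p hp
  obtain ⟨-, hlen⟩ := isVertex_trunc_iff.1 (isVertex_of_subtreeAt? hp)
  rw [IsLeaf, subtreeAt?_trunc t hlen, Option.map_eq_some_iff] at hp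
  obtain ⟨s, hs, hts⟩ := hp
  have hdepth := length_lt_height hs
  rw [height_trunc]
  rcases hlen.eq_or_lt with hlen | hlen
  · omega
  · -- above depth `m`, a leaf of the truncation is already a leaf of `t`
    obtain ⟨k, hk⟩ := Nat.exists_eq_add_one_of_ne_zero (Nat.sub_ne_zero_of_lt hlen)
    obtain ⟨cs⟩ := s
    rw [hk] at hts
    simp only [VEB.trunc, OTree.children, OTree.node.injEq, List.map_eq_nil_iff] at hts
    subst hts
    have := ht p hs
    omega

lemma mem_levelPaths {q : List ℕ} {m : ℕ} {t : OTree} :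
    q ∈ levelPaths m t ↔ IsVertex t q ∧ q.length = m := by
  induction m generalizing q t with
  | zero =>
    simp only [levelPaths, List.mem_singleton, List.length_eq_zero_iff]
    exact ⟨fun h => ⟨h ▸ rfl, h⟩, And.right⟩
  | succ m ih =>
    simp only [levelPaths, List.map_map, List.mem_flatten, List.mem_map]
    constructor
    · rintro ⟨l, ⟨⟨c, i⟩, hic, rfl⟩, hq⟩
      rw [List.mk_mem_zipIdx_iff_getElem?] at hic
      simp only [Function.comp_apply, Prod.swap, List.mem_map] at hq
      obtain ⟨q', hq', rfl⟩ := hq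
      obtain ⟨hv, hlen⟩ := ih.1 hq'
      refine ⟨?_, by simp [hlen]⟩
      simpa [IsVertex, subtreeAt?_cons, hic] using hv
    · rintro ⟨hv, hlen⟩
      obtain _ | ⟨i, q'⟩ := q
      · simp at hlen
      unfold IsVertex at hv
      rw [subtreeAt?_cons] at hv
      cases hc : t.children[i]? with
      | none => simp [hc] at hv
      | some c =>
        refine ⟨(levelPaths m c).map (i :: ·), ⟨⟨c, i⟩,
          List.mk_mem_zipIdx_iff_getElem?.2 hc, rfl⟩, ?_⟩
        simp only [hc, Option.bind_some] at hv
        exact List.mem_map.2 ⟨q', ih.2 ⟨hv, by simpa using hlen⟩, rfl⟩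

section Decomposition

variable {ε : ℝ} {fuel : ℕ} {t : OTree} {p : List ℕ} {k : ℕ}

lemma mem_decompAux_succ_of_height_le_one (h : height t ≤ 1) :
    (p, k) ∈ decompAux ε (fuel + 1) t ↔ p = [] ∧ k = 1 := by
  simp [decompAux, h]

lemma mem_decompAux_succ_of_one_lt_height (h : 1 < height t) :
    (p, k) ∈ decompAux ε (fuel + 1) t ↔
      (p = [] ∧ k = height t) ∨
      (p, k) ∈ decompAux ε fuel (trunc (cutLevel ε (height t) - 1) t) ∨
      ∃ q ∈ levelPaths (cutLevel ε (height t)) t, ∃ s r, subtreeAt? t q = some s ∧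
        (r, k) ∈ decompAux ε fuel s ∧ p = q ++ r := by
  rw [decompAux, if_neg h.not_ge]
  simp only [List.mem_cons, Prod.mk.injEq, List.mem_append, List.mem_flatten, List.mem_map]
  refine or_congr_right (or_congr_right ⟨?_, ?_⟩)
  · rintro ⟨l, ⟨q, hq, rfl⟩, hl⟩
    cases hs : subtreeAt? t q with
    | none => simp [hs] at hl
    | some s =>
      simp only [hs, List.mem_map] at hl
      obtain ⟨⟨r, k'⟩, hr, hrk⟩ := hl
      simp only [Prod.mk.injEq] at hrk
      obtain ⟨rfl, rfl⟩ := hrk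
      exact ⟨q, hq, s, r, hs, hr, rfl⟩
  · rintro ⟨q, hq, s, r, hs, hr, rfl⟩
    refine ⟨_, ⟨q, hq, rfl⟩, ?_⟩
    simpa [hs] using List.mem_map_of_mem (f := fun r => (q ++ r.1, r.2)) hr

lemma isVertex_of_mem_decompAux (h : (p, k) ∈ decompAux ε fuel t) : IsVertex t p := by
  induction fuel generalizing t p k with
  | zero => simp [decompAux] at h
  | succ fuel ih =>
    rcases le_or_gt (height t) 1 with ht | ht
    · rw [(mem_decompAux_succ_of_height_le_one ht).1 h |>.1]
      rfl
    rcases (mem_decompAux_succ_of_one_lt_height ht).1 h with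
      ⟨rfl, -⟩ | htop | ⟨q, -, s, r, hs, hr, rfl⟩
    · rfl
    · exact (isVertex_trunc_iff.1 (ih htop)).1
    · exact isVertex_append_iff.2 ⟨s, hs, ih hr⟩

theorem mem_decompAux_of_length_eq {t' : OTree} {u v : List ℕ} (ht : Uniform t) (ht' : Uniform t')
    (hh : height t = height t') (hv : IsVertex t' v) (hlen : u.length = v.length)
    (hu : (u, k) ∈ decompAux ε fuel t) : (v, k) ∈ decompAux ε fuel t' := by
  induction fuel generalizing t t' u v k with
  | zero => simp [decompAux] at hu
  | succ fuel ih =>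
    rcases le_or_gt (height t) 1 with hle | hlt
    · obtain ⟨rfl, rfl⟩ := (mem_decompAux_succ_of_height_le_one hle).1 hu
      exact (mem_decompAux_succ_of_height_le_one (hh ▸ hle)).2
        ⟨List.length_eq_zero_iff.1 hlen.symm, rfl⟩
    rw [mem_decompAux_succ_of_one_lt_height hlt] at hu
    rw [mem_decompAux_succ_of_one_lt_height (hh ▸ hlt), ← hh]
    set m := cutLevel ε (height t)
    rcases hu with ⟨rfl, rfl⟩ | htop | ⟨q, hq, s, r, hs, hr, rfl⟩
    · exact Or.inl ⟨List.length_eq_zero_iff.1 hlen.symm, rfl⟩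
    · have hulen := (isVertex_trunc_iff.1 (isVertex_of_mem_decompAux htop)).2
      refine Or.inr (Or.inl (ih (ht.trunc _) (ht'.trunc _) ?_ ?_ hlen htop))
      · rw [height_trunc, height_trunc, hh]
      · exact isVertex_trunc_iff.2 ⟨hv, hlen ▸ hulen⟩
    · -- the vertex `v` lies in the bottom tree rooted at its ancestor at the cut level
      have hqlen := (mem_levelPaths.1 hq).2
      rw [← List.take_append_drop m v] at hv
      obtain ⟨s', hs', hv'⟩ := isVertex_append_iff.1 hv
      have hvlen : (v.take m).length = m := by simp [← hlen, hqlen]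
      obtain ⟨hsu, hsh⟩ := ht.subtreeAt? hs
      obtain ⟨hsu', hsh'⟩ := ht'.subtreeAt? hs'
      have hr' := ih hsu hsu' (by omega) hv' (by simp [← hlen, hqlen]) hr
      exact Or.inr (Or.inr ⟨v.take m, mem_levelPaths.2 ⟨isVertex_of_subtreeAt? hs', hvlen⟩,
        s', v.drop m, hs', hr', (List.take_append_drop m v).symm⟩)

end Decomposition

/-- For a vertex `v` of `T`, let `T(v)` be the largest decomposition
subtree rooted at `v` and `h(v)` its height. Then `h(v)` depends only on the depth of
`v`: if `d(u) = d(v)` then `h(u) = h(v)`. -/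
theorem largest_decomp_height_depends_only_on_depth
    (ε : ℝ) (hε0 : 0 < ε) (hε1 : ε ≤ 1/2) (t : OTree) (ht : Uniform t)
    (u v : List ℕ) (hu : IsVertex t u) (hv : IsVertex t v)
    (hlen : u.length = v.length)
    (ku kv : ℕ)
    (hku : (u, ku) ∈ decompVerts ε t) (hkumax : ∀ k, (u, k) ∈ decompVerts ε t → k ≤ ku)
    (hkv : (v, kv) ∈ decompVerts ε t) (hkvmax : ∀ k, (v, k) ∈ decompVerts ε t → k ≤ kv) :
    ku = kv :=
  le_antisymm (hkvmax _ (mem_decompAux_of_length_eq ht ht rfl hv hlen hku))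
    (hkumax _ (mem_decompAux_of_length_eq ht ht rfl hu hlen.symm hkv))

end VEB
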